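/- Let T̂ ⊆ {1,…,p} satisfy |T̂| ≤ 2s* and ‖(I − Φ_{T̂})Xθ‖² ≤ c s* log p, assume ‖ε‖² ≤ 2n, event E_n holds, and p ≥ 3. Then for every S ⊆ {1,…,p} with |S| > 3s*: log(π(S)/π(T̂)) ≤ −(1/3)(D − (6L + 4 + 2c)/β)·|S| log p. In particular, if D ≥ 6 + (6L + 4 + 2c)/β then π(S) ≤ exp(−2|S| log p)·π(T̂). -/

import Mathlib

open scoped BigOperators
open Finset

noncomputable section

/-- Span of the columns `X j`, `j ∈ S`. -/
def colSpan {n p : ℕ} (X : Fin p → EuclideanSpace ℝ (Fin n)) (S : Finset (Fin p)) :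
    Submodule ℝ (EuclideanSpace ℝ (Fin n)) :=
  Submodule.span ℝ (X '' ↑S)

/-- `Φ_S`, the orthogonal projection of ℝ^n onto the span of the columns in `S`. -/
noncomputable def proj {n p : ℕ} (X : Fin p → EuclideanSpace ℝ (Fin n)) (S : Finset (Fin p)) :
    EuclideanSpace ℝ (Fin n) →ₗ[ℝ] EuclideanSpace ℝ (Fin n) :=
  (colSpan X S).subtype ∘ₗ (Submodule.orthogonalProjection (colSpan X S)).toLinearMap

/-- Restricted eigenvalue condition: `‖X_S w‖² ≥ n ν ‖w‖²` for all `S` with `|S| ≤ m`. -/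
def RECond {n p : ℕ} (X : Fin p → EuclideanSpace ℝ (Fin n)) (ν : ℝ) (m : ℕ) : Prop :=
  ∀ S : Finset (Fin p), S.card ≤ m → ∀ w : Fin p → ℝ,
    (n : ℝ) * ν * ∑ j ∈ S, w j ^ 2 ≤ ‖∑ j ∈ S, w j • X j‖ ^ 2

/-- The unnormalized weight exp(G(S,Y) − m(S)), where G(S,Y) = ‖Φ_S Y‖²/β and
m(S) = D|S| log p + (2/β) trace(Φ_S) + (4n/β) 1{|S| > 4s}. -/
noncomputable def postWt {n p : ℕ} (X : Fin p → EuclideanSpace ℝ (Fin n))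
    (Y : EuclideanSpace ℝ (Fin n)) (β D : ℝ) (s : ℕ) (S : Finset (Fin p)) : ℝ :=
  Real.exp (‖proj X S Y‖ ^ 2 / β -
    (D * S.card * Real.log p +
      2 * LinearMap.trace ℝ (EuclideanSpace ℝ (Fin n)) (proj X S) / β +
      if 4 * s < S.card then 4 * n / β else 0))

/-- The probability distribution π(S) ∝ exp(G(S,Y) − m(S)) on subsets of {1,…,p}. -/
noncomputable def postPi {n p : ℕ} (X : Fin p → EuclideanSpace ℝ (Fin n))
    (Y : EuclideanSpace ℝ (Fin n)) (β D : ℝ) (s : ℕ) (S : Finset (Fin p)) : ℝ :=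
  postWt X Y β D s S / ∑ S' : Finset (Fin p), postWt X Y β D s S'

/-!
Only the ratio `π(S) / π(T̂)` matters, so the normalising constant cancels and the claim bounds a
difference of exponents. The trace penalty costs at most `2|T̂| ≤ (4/3)|S| log p`, the size
penalty gains at least `D(|S| - |T̂|) log p ≥ (D/3)|S| log p`, and it remains to bound the gain in
fit `‖Φ_S Y‖² - ‖Φ_T̂ Y‖²`. For `|S| > 4s*` the crude bound
`‖(I - Φ_T̂) Y‖² ≤ 2‖(I - Φ_T̂) Xθ‖² + 2‖ε‖²` is paid for by the penalty `4n/β`. Otherwise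
`U = S ∪ T̂` has at most `6s*` columns and the gain is at most `‖z‖²` for `z = Φ_U (I - Φ_T̂) Y`,
which is orthogonal to the columns in `T̂`, so `‖z‖² = ⟨z, (I - Φ_T̂) Xθ⟩ + ⟨z, ε⟩`. Expanding `z`
in the columns of `U \ T̂`, Cauchy–Schwarz, the restricted eigenvalue condition and `E_n` give
`⟨z, ε⟩² ≤ ‖z‖² |S| L log p`, hence `‖z‖² ≤ 2‖(I - Φ_T̂) Xθ‖² + 2|S| L log p`.
-/

open scoped RealInnerProductSpace

theorem le_two_mul_add_of_sq_le {x u v A B : ℝ} (hx : x = u + v) (hA : 0 ≤ A) (hB : 0 ≤ B)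
    (hu : u ^ 2 ≤ x * A) (hv : v ^ 2 ≤ x * B) : x ≤ 2 * (A + B) := by
  nlinarith [sq_nonneg (u - v)]

section Projection

variable {E : Type*} [NormedAddCommGroup E] [InnerProductSpace ℝ E]
  {K M : Submodule ℝ E} [K.HasOrthogonalProjection] [M.HasOrthogonalProjection]

theorem Submodule.norm_sq_starProjection_eq_of_le (h : K ≤ M) (y : E) :
    ‖M.starProjection y‖ ^ 2 =
      ‖K.starProjection y‖ ^ 2 + ‖M.starProjection (y - K.starProjection y)‖ ^ 2 := by
  have hK : M.starProjection (K.starProjection y) = K.starProjection y :=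
    M.starProjection_eq_self_iff.2 (h (K.starProjection_apply_mem y))
  have hperp : ⟪K.starProjection y, M.starProjection (y - K.starProjection y)⟫ = 0 := by
    rw [← M.inner_starProjection_left_eq_right, hK, real_inner_comm]
    exact K.starProjection_inner_eq_zero _ _ (K.starProjection_apply_mem y)
  have hsplit : M.starProjection y =
      K.starProjection y + M.starProjection (y - K.starProjection y) := by
    rw [map_sub, hK, add_sub_cancel]
  rw [hsplit, norm_add_sq_real, hperp]
  ring

theorem Submodule.starProjection_sub_starProjection_mem_orthogonal (h : K ≤ M) (y : E) :
    M.starProjection (y - K.starProjection y) ∈ Kᗮ := by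
  intro k hk
  rw [← M.inner_starProjection_left_eq_right, M.starProjection_eq_self_iff.2 (h hk)]
  exact K.sub_starProjection_mem_orthogonal y k hk

theorem Submodule.norm_starProjection_le_of_le (h : K ≤ M) (y : E) :
    ‖K.starProjection y‖ ≤ ‖M.starProjection y‖ := by
  rw [← Submodule.starProjection_comp_starProjection_of_le h]
  exact K.norm_starProjection_apply_le _

theorem Submodule.norm_sq_starProjection_sub_le_of_le (h : K ≤ M) (μ ε : E) {B : ℝ}
    (hB : 0 ≤ B) (hε : ∀ z ∈ M, z ∈ Kᗮ → ⟪z, ε⟫ ^ 2 ≤ ‖z‖ ^ 2 * B) :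
    ‖M.starProjection (μ + ε)‖ ^ 2 - ‖K.starProjection (μ + ε)‖ ^ 2 ≤
      2 * (‖μ - K.starProjection μ‖ ^ 2 + B) := by
  set w := μ + ε - K.starProjection (μ + ε)
  set z := M.starProjection w
  have hzK : z ∈ Kᗮ := starProjection_sub_starProjection_mem_orthogonal h _
  have hz : ‖z‖ ^ 2 = ⟪z, μ - K.starProjection μ⟫ + ⟪z, ε⟫ := by
    have hε' : ⟪z, K.starProjection ε⟫ = 0 :=
      K.inner_left_of_mem_orthogonal (K.starProjection_apply_mem ε) hzK
    calc ‖z‖ ^ 2 = ⟪w, M.starProjection z⟫ :=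
          (real_inner_self_eq_norm_sq z).symm.trans (M.inner_starProjection_left_eq_right w z)
      _ = ⟪z, μ + ε - K.starProjection (μ + ε)⟫ := by
          rw [M.starProjection_eq_self_iff.2 (M.starProjection_apply_mem w), real_inner_comm]
      _ = ⟪z, μ - K.starProjection μ⟫ + ⟪z, ε⟫ := by
          rw [map_add, add_sub_add_comm, inner_add_right, inner_sub_right z ε, hε', sub_zero]
  rw [norm_sq_starProjection_eq_of_le h, add_sub_cancel_left]
  refine le_two_mul_add_of_sq_le hz (sq_nonneg _) hB ?_ (hε z (M.starProjection_apply_mem w) hzK)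
  rw [← mul_pow, ← sq_abs]
  exact pow_le_pow_left₀ (abs_nonneg _) (abs_real_inner_le_norm _ _) 2

theorem Submodule.norm_sq_starProjection_sub_le (S : Submodule ℝ E) [S.HasOrthogonalProjection]
    (μ ε : E) :
    ‖S.starProjection (μ + ε)‖ ^ 2 - ‖K.starProjection (μ + ε)‖ ^ 2 ≤
      2 * (‖μ - K.starProjection μ‖ ^ 2 + ‖ε‖ ^ 2) := by
  have hS := S.norm_starProjection_apply_le (μ + ε)
  have hpyth := norm_sq_eq_add_norm_sq_starProjection (μ + ε) K
  have hε := Kᗮ.norm_starProjection_apply_le ε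
  rw [starProjection_orthogonal_val] at hpyth hε
  have htri : ‖μ + ε - K.starProjection (μ + ε)‖ ≤
      ‖μ - K.starProjection μ‖ + ‖ε - K.starProjection ε‖ := by
    rw [map_add, add_sub_add_comm]
    exact norm_add_le _ _
  nlinarith [norm_nonneg (S.starProjection (μ + ε)), norm_nonneg (ε - K.starProjection ε),
    norm_nonneg (μ + ε - K.starProjection (μ + ε)),
    sq_nonneg (‖μ - K.starProjection μ‖ - ‖ε - K.starProjection ε‖)]

end Projection

section Design

variable {n p : ℕ} {X : Fin p → EuclideanSpace ℝ (Fin n)}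

theorem proj_apply (S : Finset (Fin p)) (y : EuclideanSpace ℝ (Fin n)) :
    proj X S y = (colSpan X S).starProjection y := rfl

theorem colSpan_mono {S U : Finset (Fin p)} (h : S ⊆ U) : colSpan X S ≤ colSpan X U :=
  Submodule.span_mono (Set.image_mono (by exact_mod_cast h))

theorem trace_proj (S : Finset (Fin p)) :
    LinearMap.trace ℝ _ (proj X S) = Module.finrank ℝ (colSpan X S) := by
  rw [proj, LinearMap.trace_comp_comm']
  have : (colSpan X S).orthogonalProjectionOnto.toLinearMap ∘ₗ (colSpan X S).subtype =
      LinearMap.id := by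
    ext v
    simp [Submodule.orthogonalProjectionOnto_mem_subspace_eq_self]
  rw [this, LinearMap.trace_id]

theorem trace_proj_le_card (S : Finset (Fin p)) :
    LinearMap.trace ℝ _ (proj X S) ≤ S.card := by
  classical
  rw [trace_proj, colSpan, ← Finset.coe_image]
  exact_mod_cast (finrank_span_finset_le_card _).trans Finset.card_image_le

theorem inner_sq_le_of_RECond {ν r : ℝ} {m : ℕ} (hRE : RECond X ν m) {T U : Finset (Fin p)}
    (hU : U.card ≤ m) (hr : 0 ≤ r) {ε : EuclideanSpace ℝ (Fin n)}
    (hE : ∀ j ∈ U \ T, ⟪X j - proj X T (X j), ε⟫ ^ 2 ≤ n * ν * r)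
    {z : EuclideanSpace ℝ (Fin n)} (hzU : z ∈ colSpan X U) (hzT : z ∈ (colSpan X T)ᗮ) :
    ⟪z, ε⟫ ^ 2 ≤ ‖z‖ ^ 2 * ((U \ T).card * r) := by
  classical
  obtain ⟨w, rfl⟩ := (Submodule.mem_span_image_finset_iff_exists_fun' ℝ).1 hzU
  set R := fun j => X j - proj X T (X j)
  have hR : ∀ j ∈ T, R j = 0 := fun j hj => sub_eq_zero.2
    (Submodule.starProjection_eq_self_iff.2 (Submodule.subset_span (Set.mem_image_of_mem X hj))).symm
  have hz : ∑ j ∈ U, w j • X j = ∑ j ∈ U \ T, w j • R j := by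
    calc ∑ j ∈ U, w j • X j
        = ∑ j ∈ U, w j • X j - proj X T (∑ j ∈ U, w j • X j) := by
          rw [proj_apply, (Submodule.starProjection_apply_eq_zero_iff _).2 hzT, sub_zero]
      _ = ∑ j ∈ U, w j • R j := by
          simp only [R, map_sum, map_smul, smul_sub, Finset.sum_sub_distrib]
      _ = ∑ j ∈ U \ T, w j • R j :=
          (Finset.sum_subset Finset.sdiff_subset fun j hjU hj => by
            rw [hR j (by simpa [hjU] using hj), smul_zero]).symm
  have hsum : ∑ j ∈ U \ T, ⟪R j, ε⟫ ^ 2 ≤ (U \ T).card * (n * ν * r) := by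
    simpa using Finset.sum_le_card_nsmul _ _ _ hE
  calc ⟪∑ j ∈ U, w j • X j, ε⟫ ^ 2
      = (∑ j ∈ U \ T, w j * ⟪R j, ε⟫) ^ 2 := by
        simp only [hz, sum_inner, real_inner_smul_left]
    _ ≤ (∑ j ∈ U \ T, w j ^ 2) * ∑ j ∈ U \ T, ⟪R j, ε⟫ ^ 2 :=
        Finset.sum_mul_sq_le_sq_mul_sq _ _ _
    _ ≤ (∑ j ∈ U, w j ^ 2) * ((U \ T).card * (n * ν * r)) :=
        mul_le_mul (Finset.sum_le_sum_of_subset_of_nonneg Finset.sdiff_subset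
          fun _ _ _ => sq_nonneg _) hsum (Finset.sum_nonneg fun _ _ => sq_nonneg _)
          (Finset.sum_nonneg fun _ _ => sq_nonneg _)
    _ = (n * ν * ∑ j ∈ U, w j ^ 2) * ((U \ T).card * r) := by ring
    _ ≤ ‖∑ j ∈ U, w j • X j‖ ^ 2 * ((U \ T).card * r) := by
        gcongr
        exact hRE U hU w

theorem norm_sq_proj_sub_le_of_RECond {ν r : ℝ} {m : ℕ} (hRE : RECond X ν m)
    {S T : Finset (Fin p)} (hST : (S ∪ T).card ≤ m) (hr : 0 ≤ r) {ε : EuclideanSpace ℝ (Fin n)}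
    (hE : ∀ j ∉ T, ⟪X j - proj X T (X j), ε⟫ ^ 2 ≤ n * ν * r) (μ : EuclideanSpace ℝ (Fin n)) :
    ‖proj X S (μ + ε)‖ ^ 2 - ‖proj X T (μ + ε)‖ ^ 2 ≤
      2 * (‖μ - proj X T μ‖ ^ 2 + S.card * r) := by
  have hcard : ((S ∪ T) \ T).card ≤ S.card := by
    rw [Finset.union_sdiff_right]
    exact Finset.card_le_card Finset.sdiff_subset
  have hSU : ‖proj X S (μ + ε)‖ ≤ ‖proj X (S ∪ T) (μ + ε)‖ :=
    Submodule.norm_starProjection_le_of_le (colSpan_mono Finset.subset_union_left) _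
  have hgain := Submodule.norm_sq_starProjection_sub_le_of_le
    (colSpan_mono (X := X) (Finset.subset_union_right (s₁ := S))) μ ε
    (mul_nonneg S.card.cast_nonneg hr) fun z hzU hzT =>
      (inner_sq_le_of_RECond hRE hST hr (fun j hj => hE j (Finset.mem_sdiff.1 hj).2) hzU hzT).trans
        (by gcongr)
  rw [← proj_apply, ← proj_apply, ← proj_apply] at hgain
  nlinarith [norm_nonneg (proj X S (μ + ε))]

theorem norm_sq_proj_sub_sub_ite_le {ν r : ℝ} {s : ℕ} (hRE : RECond X ν (6 * s))
    {S T : Finset (Fin p)} (hT : T.card ≤ 2 * s) (hr : 0 ≤ r) {ε : EuclideanSpace ℝ (Fin n)}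
    (hε : ‖ε‖ ^ 2 ≤ 2 * n)
    (hE : ∀ j ∉ T, ⟪X j - proj X T (X j), ε⟫ ^ 2 ≤ n * ν * r) (μ : EuclideanSpace ℝ (Fin n)) :
    ‖proj X S (μ + ε)‖ ^ 2 - ‖proj X T (μ + ε)‖ ^ 2 - (if 4 * s < S.card then 4 * (n : ℝ) else 0) ≤
      2 * (‖μ - proj X T μ‖ ^ 2 + S.card * r) := by
  split_ifs with hS
  · have hgain := Submodule.norm_sq_starProjection_sub_le (K := colSpan X T) (colSpan X S) μ ε
    have hSr : (0 : ℝ) ≤ S.card * r := by positivity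
    simp only [proj_apply]
    linarith
  · have hST : (S ∪ T).card ≤ 6 * s := (Finset.card_union_le S T).trans (by omega)
    linarith [norm_sq_proj_sub_le_of_RECond hRE hST hr hE μ]

end Design

section Posterior

variable {n p : ℕ} (X : Fin p → EuclideanSpace ℝ (Fin n)) (Y : EuclideanSpace ℝ (Fin n))
  (β D : ℝ) (s : ℕ)

def logPostWt (S : Finset (Fin p)) : ℝ :=
  ‖proj X S Y‖ ^ 2 / β -
    (D * S.card * Real.log p + 2 * LinearMap.trace ℝ _ (proj X S) / β +
      if 4 * s < S.card then 4 * n / β else 0)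

theorem postPi_pos (S : Finset (Fin p)) : 0 < postPi X Y β D s S :=
  div_pos (Real.exp_pos _) (Finset.sum_pos (fun _ _ => Real.exp_pos _) Finset.univ_nonempty)

theorem postPi_div_postPi (S S' : Finset (Fin p)) :
    postPi X Y β D s S / postPi X Y β D s S' =
      Real.exp (logPostWt X Y β D s S - logPostWt X Y β D s S') := by
  have hZ : ∑ S'' : Finset (Fin p), postWt X Y β D s S'' ≠ 0 :=
    (Finset.sum_pos (fun _ _ => Real.exp_pos _) Finset.univ_nonempty).ne'
  rw [postPi, postPi, div_div_div_cancel_right₀ hZ, postWt, postWt, ← Real.exp_sub]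
  rfl

theorem postPi_eq_exp_mul (S S' : Finset (Fin p)) :
    postPi X Y β D s S =
      Real.exp (logPostWt X Y β D s S - logPostWt X Y β D s S') * postPi X Y β D s S' := by
  rw [← postPi_div_postPi, div_mul_cancel₀ _ (postPi_pos X Y β D s S').ne']

variable {X Y β D s}

theorem logPostWt_sub_le {K : ℝ} (hβ : 0 < β) (hD : 0 ≤ D) (hp : 1 ≤ Real.log p)
    {S T : Finset (Fin p)} (hT : T.card ≤ 2 * s) (hS : 3 * s < S.card)
    (hfit : ‖proj X S Y‖ ^ 2 - ‖proj X T Y‖ ^ 2 - (if 4 * s < S.card then 4 * (n : ℝ) else 0) ≤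
      (K - 4) / 3 * S.card * Real.log p) :
    logPostWt X Y β D s S - logPostWt X Y β D s T ≤
      -(1 / 3) * (D - K / β) * S.card * Real.log p := by
  have hT' : (T.card : ℝ) ≤ 2 * s := by exact_mod_cast hT
  have hS' : 3 * (s : ℝ) ≤ S.card := by exact_mod_cast hS.le
  have htr : 2 * (LinearMap.trace ℝ _ (proj X T) - LinearMap.trace ℝ _ (proj X S)) ≤
      4 / 3 * S.card * Real.log p := by
    have h0 : 0 ≤ LinearMap.trace ℝ _ (proj X S) := by rw [trace_proj]; positivity
    nlinarith [trace_proj_le_card (X := X) T]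
  have hgain := div_le_div_of_nonneg_right (add_le_add hfit htr) hβ.le
  have hpen : D * (S.card / 3) * Real.log p ≤ D * (S.card - T.card) * Real.log p := by
    gcongr
    linarith
  have hite : (if 4 * s < S.card then 4 * (n : ℝ) / β else 0) =
      (if 4 * s < S.card then 4 * (n : ℝ) else 0) / β := by
    split_ifs <;> simp
  rw [logPostWt, logPostWt, hite, if_neg (show ¬4 * s < T.card by omega)]
  calc _ = ((‖proj X S Y‖ ^ 2 - ‖proj X T Y‖ ^ 2 -
          (if 4 * s < S.card then 4 * (n : ℝ) else 0)) +
          2 * (LinearMap.trace ℝ _ (proj X T) - LinearMap.trace ℝ _ (proj X S))) / β -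
        D * (S.card - T.card) * Real.log p := by ring
    _ ≤ ((K - 4) / 3 * S.card * Real.log p + 4 / 3 * S.card * Real.log p) / β -
        D * (S.card / 3) * Real.log p := by linarith
    _ = -(1 / 3) * (D - K / β) * S.card * Real.log p := by ring

end Posterior

theorem stmt9_general {n p s : ℕ} (hp : 3 ≤ p) (hs : 0 < s)
    (X : Fin p → EuclideanSpace ℝ (Fin n))
    {ν : ℝ} (hRE : RECond X ν (6 * s))
    (θ : Fin p → ℝ)
    (ε Y : EuclideanSpace ℝ (Fin n)) (hY : Y = (∑ j, θ j • X j) + ε)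
    (β D c L : ℝ) (hβ : 0 < β) (hD : 0 < D) (hc : 0 < c) (hL : 0 < L)
    (That : Finset (Fin p)) (hThatcard : That.card ≤ 2 * s)
    (hThatrisk : ‖(∑ j, θ j • X j) - proj X That (∑ j, θ j • X j)‖ ^ 2 ≤
      c * s * Real.log p)
    (hF : ‖ε‖ ^ 2 ≤ 2 * n)
    (hE : ∀ S : Finset (Fin p), S.card < 6 * s → ∀ j ∉ S,
      (inner ℝ (X j - proj X S (X j)) ε : ℝ) ^ 2 ≤ (n : ℝ) * L * ν * Real.log p)
    (S : Finset (Fin p)) (hScard : 3 * s < S.card) :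
    Real.log (postPi X Y β D s S / postPi X Y β D s That) ≤
      -(1 / 3) * (D - (6 * L + 4 + 2 * c) / β) * S.card * Real.log p ∧
    (6 + (6 * L + 4 + 2 * c) / β ≤ D →
      postPi X Y β D s S ≤
        Real.exp (-(2 * S.card) * Real.log p) * postPi X Y β D s That) := by
  have hlogp : 1 ≤ Real.log p := by
    rw [Real.le_log_iff_exp_le (by exact_mod_cast (by omega : 0 < p))]
    have : (3 : ℝ) ≤ p := by exact_mod_cast hp
    linarith [Real.exp_one_lt_d9]
  have hfit := norm_sq_proj_sub_sub_ite_le (S := S) hRE hThatcard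
    (mul_nonneg hL.le (zero_le_one.trans hlogp)) hF
    (fun j hj => (hE That (by omega) j hj).trans_eq (by ring)) (∑ j, θ j • X j)
  rw [← hY] at hfit
  have hS : 3 * (s : ℝ) ≤ S.card := by exact_mod_cast hScard.le
  have hrisk : 2 * (‖(∑ j, θ j • X j) - proj X That (∑ j, θ j • X j)‖ ^ 2 +
      S.card * (L * Real.log p)) ≤ (6 * L + 4 + 2 * c - 4) / 3 * S.card * Real.log p := by
    nlinarith [mul_le_mul_of_nonneg_left hS (mul_nonneg hc.le (zero_le_one.trans hlogp))]
  have key := logPostWt_sub_le hβ hD.le hlogp hThatcard hScard (hfit.trans hrisk)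
  refine ⟨by rwa [postPi_div_postPi, Real.log_exp], fun hD6 => ?_⟩
  rw [postPi_eq_exp_mul X Y β D s S That]
  have hπ := postPi_pos X Y β D s That
  gcongr
  nlinarith [mul_nonneg (Nat.cast_nonneg (α := ℝ) S.card) (zero_le_one.trans hlogp)]

/-- under events A_n, E_n, F_n and p ≥ 3, for every S with |S| > 3s*,
log(π(S)/π(T̂)) ≤ −(1/3)(D − (6L+4+2c)/β)|S| log p; in particular if
D ≥ 6 + (6L+4+2c)/β then π(S) ≤ exp(−2|S| log p)·π(T̂). -/
theorem stmt9 {n p s : ℕ} (hn : 0 < n) (hp : 3 ≤ p) (hs : 0 < s) (hsp : 6 * s ≤ p)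
    (X : Fin p → EuclideanSpace ℝ (Fin n))
    (hX : ∀ j, ‖X j‖ = Real.sqrt n)
    {ν : ℝ} (hν : 0 < ν) (hRE : RECond X ν (6 * s))
    (θ : Fin p → ℝ) (T : Finset (Fin p)) (hT : T = Finset.univ.filter fun j => θ j ≠ 0)
    (hTcard : T.card = s)
    (ε Y : EuclideanSpace ℝ (Fin n)) (hY : Y = (∑ j, θ j • X j) + ε)
    (β D c L : ℝ) (hβ : 0 < β) (hD : 0 < D) (hc : 0 < c) (hL : 0 < L)
    (That : Finset (Fin p)) (hThatcard : That.card ≤ 2 * s)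
    (hThatrisk : ‖(∑ j, θ j • X j) - proj X That (∑ j, θ j • X j)‖ ^ 2 ≤
      c * s * Real.log p)
    (hF : ‖ε‖ ^ 2 ≤ 2 * n)
    (hE : ∀ S : Finset (Fin p), S.card < 6 * s → ∀ j ∉ S,
      (inner ℝ (X j - proj X S (X j)) ε : ℝ) ^ 2 ≤ (n : ℝ) * L * ν * Real.log p)
    (S : Finset (Fin p)) (hScard : 3 * s < S.card) :
    Real.log (postPi X Y β D s S / postPi X Y β D s That) ≤
      -(1 / 3) * (D - (6 * L + 4 + 2 * c) / β) * S.card * Real.log p ∧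
    (6 + (6 * L + 4 + 2 * c) / β ≤ D →
      postPi X Y β D s S ≤
        Real.exp (-(2 * S.card) * Real.log p) * postPi X Y β D s That) :=
  stmt9_general hp hs X hRE θ ε Y hY β D c L hβ hD hc hL That hThatcard hThatrisk hF hE S hScard

end
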